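/- arXiv:2002.10802 — 6 statements merged into one kernel-verified Lean document; each statement's English description precedes it below -/
import Mathlib

section
/- The scoring rule hs(q) = 1 - √((1-q)/q) on [0,1] is proper: for every p ∈ (0,1), the function q ↦ p·hs(q) + (1-p)·hs(1-q) is uniquely maximized at q = p. -/
/-! Writing `r = √((1-q)/q)`, the expected score of the report `q` is `1 - (p r + (1-p)/r)`,
since the odds of `1 - q` are the reciprocal of those of `q`. The map `q ↦ r` is injective on
`(0,1)`, and `r ↦ p r + (1-p)/r` has the strict minimum `r = √((1-p)/p)` on `(0,∞)`. -/

open scoped Real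

/-- The scoring rule `hs(q) = 1 - √((1-q)/q)`, with `hs 0 = -∞`. -/
noncomputable def hs : ℝ → EReal := fun q =>
  if q = 0 then ⊥ else ((1 - Real.sqrt ((1 - q) / q) : ℝ) : EReal)

lemma mul_add_div_lt_of_mul_sq_eq {a b r s : ℝ} (ha : 0 < a) (hr : 0 < r)
    (hab : a * s ^ 2 = b) (hrs : r ≠ s) : a * s + b / s < a * r + b / r := by
  have hgap : a * r + b / r - (a * s + b / s) = a * (r - s) ^ 2 / r := by
    subst hab
    field_simp
    ring
  have : 0 < a * (r - s) ^ 2 / r := by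
    have := sub_ne_zero.2 hrs
    positivity
  linarith

lemma sqrt_one_sub_div_injOn :
    Set.InjOn (fun q : ℝ => √((1 - q) / q)) (Set.Ioo 0 1) := by
  intro q hq p hp hpq
  have hq' : 0 ≤ (1 - q) / q := div_nonneg (by linarith [hq.2]) hq.1.le
  have hp' : 0 ≤ (1 - p) / p := div_nonneg (by linarith [hp.2]) hp.1.le
  have h := (Real.sqrt_inj hq' hp').1 hpq
  rw [div_eq_div_iff hq.1.ne' hp.1.ne'] at h
  linarith

lemma hs_zero : hs 0 = ⊥ := if_pos rfl

lemma hs_of_pos {q : ℝ} (hq : 0 < q) : hs q = ((1 - √((1 - q) / q) : ℝ) : EReal) := by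
  simp [hs, hq.ne']

lemma hs_one_sub_of_lt_one {q : ℝ} (hq : q < 1) :
    hs (1 - q) = ((1 - (√((1 - q) / q))⁻¹ : ℝ) : EReal) := by
  rw [hs_of_pos (sub_pos.2 hq), sub_sub_cancel, ← Real.sqrt_inv, inv_div]

lemma expected_hs_eq (p : ℝ) {q : ℝ} (hq0 : 0 < q) (hq1 : q < 1) :
    (p : EReal) * hs q + ((1 - p : ℝ) : EReal) * hs (1 - q) =
      ((1 - (p * √((1 - q) / q) + (1 - p) / √((1 - q) / q)) : ℝ) : EReal) := by
  rw [hs_of_pos hq0, hs_one_sub_of_lt_one hq1, ← EReal.coe_mul, ← EReal.coe_mul,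
    ← EReal.coe_add]
  congr 1
  ring

/-- The scoring rule `hs` is proper: for every `p ∈ (0,1)` the expected score
`q ↦ p·hs(q) + (1-p)·hs(1-q)` over `q ∈ [0,1]` is uniquely maximized at `q = p`. -/
theorem hs_proper (p : ℝ) (hp0 : 0 < p) (hp1 : p < 1) :
    ∀ q ∈ Set.Icc (0 : ℝ) 1, q ≠ p →
      (p : EReal) * hs q + ((1 - p : ℝ) : EReal) * hs (1 - q) <
        (p : EReal) * hs p + ((1 - p : ℝ) : EReal) * hs (1 - p) := by
  intro q ⟨hq0, hq1⟩ hqp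
  rw [expected_hs_eq p hp0 hp1]
  rcases hq0.eq_or_lt with rfl | hq0
  · rw [hs_zero, EReal.coe_mul_bot_of_pos hp0, EReal.bot_add]
    exact EReal.bot_lt_coe _
  rcases hq1.eq_or_lt with rfl | hq1
  · rw [sub_self, hs_zero, EReal.coe_mul_bot_of_pos (sub_pos.2 hp1), EReal.add_bot]
    exact EReal.bot_lt_coe _
  rw [expected_hs_eq p hq0 hq1, EReal.coe_lt_coe_iff, sub_lt_sub_iff_left]
  have hodds : p * √((1 - p) / p) ^ 2 = 1 - p := by
    rw [Real.sq_sqrt (div_nonneg (sub_pos.2 hp1).le hp0.le), mul_div_cancel₀ _ hp0.ne']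
  exact mul_add_div_lt_of_mul_sq_eq hp0 (Real.sqrt_pos.2 (div_pos (sub_pos.2 hq1) hq0)) hodds
    (fun h => hqp (sqrt_one_sub_div_injOn ⟨hq0, hq1⟩ ⟨hp0, hp1⟩ h))
end

section
/- For all x ∈ [0,1], the chain of inequalities x²/2 ≤ 1 - √(1-x²) ≤ 1 - H((1+x)/2) ≤ x² ≤ x holds, where H is the binary entropy function. -/
/-!
Write `G x = (1 + x) log (1 + x) + (1 - x) log (1 - x)` (twice the divergence of the
`(1 ± x) / 2` coin from a fair one). Then `1 - H((1 + x) / 2) = G x / (2 log 2)`, so the two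
middle inequalities read `2 log 2 (1 - √(1 - x²)) ≤ G x ≤ 2 log 2 · x²`. Each difference
`f` vanishes at `0` together with `f'`, and at `1`, while `f''` is first nonnegative and then
nonpositive on `[0, 1]`: so `f` increases from `0` up to the sign change of `f''` and is
concave afterwards, hence `f ≥ 0` throughout. The outer two inequalities are elementary.
-/

/-- The binary entropy function with logarithm base 2. -/
noncomputable def binaryEntropy : ℝ → ℝ := fun a =>
  a * Real.logb 2 (1 / a) + (1 - a) * Real.logb 2 (1 / (1 - a))

open Real Set

lemma monotoneOn_Icc_of_hasDerivAt_nonneg {g g' : ℝ → ℝ} {a b : ℝ}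
    (hg : ∀ x ∈ Icc a b, HasDerivAt g (g' x) x) (hg' : ∀ x ∈ Ioo a b, 0 ≤ g' x) :
    MonotoneOn g (Icc a b) :=
  monotoneOn_of_hasDerivWithinAt_nonneg (convex_Icc a b)
    (fun x hx => (hg x hx).continuousAt.continuousWithinAt)
    (fun x hx => by
      rw [interior_Icc] at hx ⊢
      exact (hg x (Ioo_subset_Icc_self hx)).hasDerivWithinAt)
    (fun x hx => by rw [interior_Icc] at hx; exact hg' x hx)

theorem nonneg_of_convex_of_concave {f f' f'' : ℝ → ℝ} {a b c : ℝ}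
    (hac : a ≤ c) (hcb : c < b)
    (hf : ContinuousOn f (Icc a b))
    (hf' : ∀ x ∈ Ico a b, HasDerivAt f (f' x) x)
    (hf'' : ∀ x ∈ Ico a b, HasDerivAt f' (f'' x) x)
    (hfa : 0 ≤ f a) (hf'a : 0 ≤ f' a) (hfb : 0 ≤ f b)
    (hconvex : ∀ x ∈ Ioo a c, 0 ≤ f'' x) (hconcave : ∀ x ∈ Ioo c b, f'' x ≤ 0) :
    ∀ x ∈ Icc a b, 0 ≤ f x := by
  have hsub : Icc a c ⊆ Ico a b := Icc_subset_Ico_right hcb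
  have hf'_nonneg : ∀ x ∈ Icc a c, 0 ≤ f' x := fun x hx =>
    hf'a.trans <| monotoneOn_Icc_of_hasDerivAt_nonneg (fun y hy => hf'' y (hsub hy)) hconvex
      (left_mem_Icc.2 hac) hx hx.1
  have hf_left : ∀ x ∈ Icc a c, 0 ≤ f x := fun x hx =>
    hfa.trans <| monotoneOn_Icc_of_hasDerivAt_nonneg (fun y hy => hf' y (hsub hy))
      (fun y hy => hf'_nonneg y (Ioo_subset_Icc_self hy)) (left_mem_Icc.2 hac) hx hx.1
  have hsub' : Ioo c b ⊆ Ico a b := fun x hx => ⟨hac.trans hx.1.le, hx.2⟩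
  have hf_concave : ConcaveOn ℝ (Icc c b) f := by
    refine concaveOn_of_hasDerivWithinAt2_nonpos (convex_Icc c b)
      (hf.mono (Icc_subset_Icc_left hac)) (f' := f') (f'' := f'') ?_ ?_ ?_ <;>
      simp only [interior_Icc]
    · exact fun x hx => (hf' x (hsub' hx)).hasDerivWithinAt
    · exact fun x hx => (hf'' x (hsub' hx)).hasDerivWithinAt
    · exact hconcave
  intro x hx
  rcases le_total x c with hxc | hcx
  · exact hf_left x ⟨hx.1, hxc⟩
  · exact (le_min (hf_left c ⟨hac, le_rfl⟩) hfb).trans <|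
      hf_concave.min_le_of_mem_Icc (left_mem_Icc.2 hcb.le) (right_mem_Icc.2 hcb.le) ⟨hcx, hx.2⟩

noncomputable def entropyGap (x : ℝ) : ℝ := (1 + x) * log (1 + x) + (1 - x) * log (1 - x)

lemma one_sub_binaryEntropy_eq (x : ℝ) :
    1 - binaryEntropy ((1 + x) / 2) = entropyGap x / (2 * log 2) := by
  have hlog : ∀ t : ℝ, t / 2 * log (1 / (t / 2)) = (t * log 2 - t * log t) / 2 := fun t => by
    rcases eq_or_ne t 0 with rfl | ht
    · simp
    · rw [one_div_div, log_div two_ne_zero ht]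
      ring
  have hlog2 : log 2 ≠ 0 := (log_pos one_lt_two).ne'
  have hsub : 1 - (1 + x) / 2 = (1 - x) / 2 := by ring
  simp only [binaryEntropy, logb, entropyGap, hsub, mul_div_assoc', hlog]
  field_simp
  ring

lemma continuous_entropyGap : Continuous entropyGap :=
  (continuous_mul_log.comp (continuous_const.add continuous_id)).add
    (continuous_mul_log.comp (continuous_const.sub continuous_id))

lemma hasDerivAt_entropyGap {x : ℝ} (h₁ : -1 < x) (h₂ : x < 1) :
    HasDerivAt entropyGap (log (1 + x) - log (1 - x)) x := by
  have hplus := (hasDerivAt_mul_log (by linarith : 1 + x ≠ 0)).comp x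
    ((hasDerivAt_id' x).const_add 1)
  have hminus := (hasDerivAt_mul_log (by linarith : 1 - x ≠ 0)).comp x
    ((hasDerivAt_id' x).const_sub 1)
  exact (hplus.add hminus).congr_deriv (by ring)

lemma hasDerivAt_log_one_add_sub_log_one_sub {x : ℝ} (h₁ : -1 < x) (h₂ : x < 1) :
    HasDerivAt (fun y => log (1 + y) - log (1 - y)) (2 / (1 - x ^ 2)) x := by
  have hplus := ((hasDerivAt_id' x).const_add 1).log (by linarith)
  have hminus := ((hasDerivAt_id' x).const_sub 1).log (by linarith)
  refine (hplus.sub hminus).congr_deriv ?_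
  have h₁' : 1 + x ≠ 0 := by linarith
  have h₂' : 1 - x ≠ 0 := by linarith
  rw [show 1 - x ^ 2 = (1 + x) * (1 - x) by ring]
  field_simp
  ring

lemma hasDerivAt_sqrt_one_sub_sq {x : ℝ} (h₁ : -1 < x) (h₂ : x < 1) :
    HasDerivAt (fun y => √(1 - y ^ 2)) (-(x / √(1 - x ^ 2))) x := by
  have hpos : 0 < 1 - x ^ 2 := by nlinarith
  refine (((hasDerivAt_pow 2 x).const_sub 1).sqrt hpos.ne').congr_deriv ?_
  field_simp
  ring

lemma hasDerivAt_div_sqrt_one_sub_sq {x : ℝ} (h₁ : -1 < x) (h₂ : x < 1) :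
    HasDerivAt (fun y => y / √(1 - y ^ 2)) (1 / √(1 - x ^ 2) ^ 3) x := by
  have hpos : 0 < 1 - x ^ 2 := by nlinarith
  have hsqrt : 0 < √(1 - x ^ 2) := sqrt_pos.2 hpos
  refine ((hasDerivAt_id' x).div (hasDerivAt_sqrt_one_sub_sq h₁ h₂) hsqrt.ne').congr_deriv ?_
  field_simp
  rw [sq_sqrt hpos.le]
  ring

lemma entropyGap_le_mul_sq {x : ℝ} (hx : x ∈ Icc (0 : ℝ) 1) :
    entropyGap x ≤ 2 * log 2 * x ^ 2 := by
  have hlog2 : 1 / 2 < log 2 := by linarith [log_two_gt_d9]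
  set c := √(1 - 1 / (2 * log 2))
  have hc : 2 * log 2 * (1 - c ^ 2) = 1 := by
    rw [sq_sqrt (by rw [sub_nonneg, div_le_one₀ (by positivity)]; linarith)]
    field_simp
    ring
  have hc1 : c < 1 := (sqrt_lt' one_pos).2 (by simp; positivity)
  refine sub_nonneg.1 <| nonneg_of_convex_of_concave (c := c)
    (f := fun x => 2 * log 2 * x ^ 2 - entropyGap x)
    (f' := fun x => 4 * log 2 * x - (log (1 + x) - log (1 - x)))
    (f'' := fun x => 2 * (2 * log 2 * (1 - x ^ 2) - 1) / (1 - x ^ 2))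
    (sqrt_nonneg _) hc1 ((by fun_prop : Continuous fun x : ℝ => 2 * log 2 * x ^ 2).sub
      continuous_entropyGap).continuousOn ?_ ?_ (by simp [entropyGap]) (by simp)
    (by norm_num [entropyGap]) ?_ ?_ x hx
  · rintro y ⟨hy0, hy1⟩
    exact (((hasDerivAt_pow 2 y).const_mul (2 * log 2)).sub
      (hasDerivAt_entropyGap (by linarith) hy1)).congr_deriv (by ring)
  · rintro y ⟨hy0, hy1⟩
    have hpos : 0 < 1 - y ^ 2 := by nlinarith
    exact (((hasDerivAt_id' y).const_mul (4 * log 2)).sub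
      (hasDerivAt_log_one_add_sub_log_one_sub (by linarith) hy1)).congr_deriv
      (by field_simp; ring)
  · rintro y ⟨hy0, hyc⟩
    have hpos : 0 < 1 - y ^ 2 := by nlinarith
    refine div_nonneg ?_ hpos.le
    nlinarith [mul_self_lt_mul_self hy0.le hyc]
  · rintro y ⟨hcy, hy1⟩
    have hy0 : 0 ≤ y := (sqrt_nonneg _).trans hcy.le
    have hpos : 0 < 1 - y ^ 2 := by nlinarith
    refine div_nonpos_of_nonpos_of_nonneg ?_ hpos.le
    nlinarith [mul_self_lt_mul_self (sqrt_nonneg _) hcy]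

lemma mul_one_sub_sqrt_le_entropyGap {x : ℝ} (hx : x ∈ Icc (0 : ℝ) 1) :
    2 * log 2 * (1 - √(1 - x ^ 2)) ≤ entropyGap x := by
  have hlog2 : 0 ≤ log 2 := by positivity
  have hc1 : √(1 - log 2 ^ 2) < 1 := (sqrt_lt' one_pos).2 (by simp; positivity)
  refine sub_nonneg.1 <| nonneg_of_convex_of_concave (c := √(1 - log 2 ^ 2))
    (f := fun x => entropyGap x - 2 * log 2 * (1 - √(1 - x ^ 2)))
    (f' := fun x => (log (1 + x) - log (1 - x)) - 2 * log 2 * (x / √(1 - x ^ 2)))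
    (f'' := fun x => 2 * (√(1 - x ^ 2) - log 2) / √(1 - x ^ 2) ^ 3)
    (sqrt_nonneg _) hc1 (continuous_entropyGap.sub (by fun_prop)).continuousOn ?_ ?_
    (by simp [entropyGap]) (by simp) (by norm_num [entropyGap]) ?_ ?_ x hx
  · rintro y ⟨hy0, hy1⟩
    have hsqrt := (hasDerivAt_sqrt_one_sub_sq (by linarith) hy1).const_sub 1
    exact ((hasDerivAt_entropyGap (by linarith) hy1).sub
      (hsqrt.const_mul (2 * log 2))).congr_deriv (by ring)
  · rintro y ⟨hy0, hy1⟩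
    have hpos : 0 < 1 - y ^ 2 := by nlinarith
    have hsqrt : 0 < √(1 - y ^ 2) := sqrt_pos.2 hpos
    refine ((hasDerivAt_log_one_add_sub_log_one_sub (by linarith) hy1).sub
      ((hasDerivAt_div_sqrt_one_sub_sq (by linarith) hy1).const_mul (2 * log 2))).congr_deriv ?_
    field_simp
    linear_combination √(1 - y ^ 2) * sq_sqrt hpos.le
  · rintro y ⟨hy0, hyc⟩
    have hpos : 0 < 1 - y ^ 2 := by nlinarith
    have hL : log 2 ≤ √(1 - y ^ 2) := by
      rw [le_sqrt hlog2 hpos.le]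
      linarith [(lt_sqrt hy0.le).1 hyc]
    have := sqrt_pos.2 hpos
    have := sub_nonneg.2 hL
    positivity
  · rintro y ⟨hcy, hy1⟩
    have hy0 : 0 < y := (sqrt_nonneg _).trans_lt hcy
    have hL : √(1 - y ^ 2) ≤ log 2 := by
      rw [sqrt_le_left hlog2]
      linarith [(sqrt_lt' hy0).1 hcy]
    exact div_nonpos_of_nonpos_of_nonneg (by linarith) (by positivity)

lemma sq_div_two_le_one_sub_sqrt_one_sub_sq {x : ℝ} (hx : x ^ 2 ≤ 2) :
    x ^ 2 / 2 ≤ 1 - √(1 - x ^ 2) := by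
  have : √(1 - x ^ 2) ≤ 1 - x ^ 2 / 2 := (sqrt_le_left (by linarith)).2 (by nlinarith)
  linarith

/-- For all `x ∈ [0,1]`:
`x²/2 ≤ 1 - √(1-x²) ≤ 1 - H((1+x)/2) ≤ x² ≤ x`. -/
theorem entropy_chain_inequalities (x : ℝ) (hx : x ∈ Set.Icc (0 : ℝ) 1) :
    x ^ 2 / 2 ≤ 1 - Real.sqrt (1 - x ^ 2) ∧
    1 - Real.sqrt (1 - x ^ 2) ≤ 1 - binaryEntropy ((1 + x) / 2) ∧
    1 - binaryEntropy ((1 + x) / 2) ≤ x ^ 2 ∧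
    x ^ 2 ≤ x := by
  have hlog2 : 0 < 2 * log 2 := by positivity
  have hsq : x ^ 2 ≤ x := sq_le hx.1 hx.2
  rw [one_sub_binaryEntropy_eq, le_div_iff₀ hlog2, div_le_iff₀ hlog2]
  exact ⟨sq_div_two_le_one_sub_sqrt_one_sub_sq (by linarith [hx.2]),
    by linarith [mul_one_sub_sqrt_le_entropyGap hx], by linarith [entropyGap_le_mul_sq hx], hsq⟩
end

section
/- For all x ∈ [0,1], we have 1 - H((1+x)/2) ≤ (1 - √(1-x²))/ln 2 and x² ≤ (ln 4)·(1 - H((1+x)/2)), where H is the binary entropy function with logarithm base 2. -/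
/-!
In nats, `log 2 - binEntropy ((1 + x) / 2)` has derivative `artanh x`, while `x² / 2` and
`1 - √(1 - x²)` have derivatives `x = tanh (artanh x)` and `x / √(1 - x²) = sinh (artanh x)`.
All three vanish at `0`, so both inequalities follow by integrating `tanh u ≤ u ≤ sinh u`
for `u ≥ 0`.
-/

open Real Set

theorem binaryEntropy_eq_binEntropy_div_log_two (p : ℝ) :
    binaryEntropy p = binEntropy p / log 2 := by
  simp only [binaryEntropy, binEntropy, logb, one_div]
  ring

namespace Real

theorem artanh_eq_half_log_sub_log {x : ℝ} (hx : x ∈ Ioo (-1) 1) :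
    artanh x = (log (1 + x) - log (1 - x)) / 2 := by
  rw [artanh_eq_half_log (Ioo_subset_Icc_self hx), log_div (by grind) (by grind)]
  ring

theorem self_le_artanh {x : ℝ} (hx₀ : 0 ≤ x) (hx₁ : x < 1) : x ≤ artanh x := by
  have hx : x ∈ Ioo (-1) 1 := ⟨by linarith, hx₁⟩
  have leading : 2 * x ≤ log (1 + x) - log (1 - x) := by
    simpa using le_hasSum (hasSum_log_sub_log_of_abs_lt_one (abs_lt.mpr hx)) 0
      fun k _ => by positivity
  rw [artanh_eq_half_log_sub_log hx]
  linarith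

theorem artanh_le_div_sqrt_one_sub_sq {x : ℝ} (hx₀ : 0 ≤ x) (hx₁ : x < 1) :
    artanh x ≤ x / √(1 - x ^ 2) := by
  have hx : x ∈ Ioo (-1) 1 := ⟨by linarith, hx₁⟩
  rw [← sinh_artanh hx]
  exact self_le_sinh_iff.mpr (artanh_nonneg hx₀)

end Real

theorem hasDerivAt_log_two_sub_binEntropy_one_add_div_two {x : ℝ} (hx : x ∈ Ioo (-1) 1) :
    HasDerivAt (fun x => log 2 - binEntropy ((1 + x) / 2)) (artanh x) x := by
  have hp₀ : (1 + x) / 2 ≠ 0 := by grind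
  have hp₁ : (1 + x) / 2 ≠ 1 := by grind
  have hmid : HasDerivAt (fun x : ℝ => (1 + x) / 2) (1 / 2) x :=
    ((hasDerivAt_id x).const_add 1).div_const 2
  refine (((hasDerivAt_binEntropy hp₀ hp₁).comp x hmid).const_sub (log 2)).congr_deriv ?_
  rw [artanh_eq_half_log_sub_log hx, show 1 - (1 + x) / 2 = (1 - x) / 2 by ring,
    log_div (by grind) two_ne_zero, log_div (by grind) two_ne_zero]
  ring

theorem hasDerivAt_one_sub_sqrt_one_sub_sq {x : ℝ} (hx : x ∈ Ioo (-1) 1) :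
    HasDerivAt (fun x => 1 - √(1 - x ^ 2)) (x / √(1 - x ^ 2)) x := by
  have hpos : 0 < 1 - x ^ 2 := by nlinarith [hx.1, hx.2]
  have hsq : HasDerivAt (fun x : ℝ => 1 - x ^ 2) (-(2 * x)) x := by
    simpa using (hasDerivAt_pow 2 x).const_sub 1
  refine ((hsq.sqrt hpos.ne').const_sub 1).congr_deriv ?_
  field_simp

theorem log_two_sub_binEntropy_le_one_sub_sqrt {x : ℝ} (hx₀ : 0 ≤ x) (hx₁ : x ≤ 1) :
    log 2 - binEntropy ((1 + x) / 2) ≤ 1 - √(1 - x ^ 2) := by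
  refine image_le_of_deriv_right_le_deriv_boundary (a := 0) (b := 1) (by fun_prop)
    (fun t ht => (hasDerivAt_log_two_sub_binEntropy_one_add_div_two
      ⟨by linarith [ht.1], ht.2⟩).hasDerivWithinAt)
    (by simp [one_div]) (by fun_prop)
    (fun t ht => (hasDerivAt_one_sub_sqrt_one_sub_sq
      ⟨by linarith [ht.1], ht.2⟩).hasDerivWithinAt)
    (fun t ht => artanh_le_div_sqrt_one_sub_sq ht.1 ht.2) ⟨hx₀, hx₁⟩

theorem sq_div_two_le_log_two_sub_binEntropy {x : ℝ} (hx₀ : 0 ≤ x) (hx₁ : x ≤ 1) :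
    x ^ 2 / 2 ≤ log 2 - binEntropy ((1 + x) / 2) := by
  refine image_le_of_deriv_right_le_deriv_boundary (f := fun t => t ^ 2 / 2) (a := 0) (b := 1)
    (by fun_prop) (fun t _ => by simpa using ((hasDerivAt_pow 2 t).div_const 2).hasDerivWithinAt)
    (by simp [one_div]) (by fun_prop)
    (fun t ht => (hasDerivAt_log_two_sub_binEntropy_one_add_div_two
      ⟨by linarith [ht.1], ht.2⟩).hasDerivWithinAt)
    (fun t ht => self_le_artanh ht.1 ht.2) ⟨hx₀, hx₁⟩

/-- For all `x ∈ [0,1]`: `1 - H((1+x)/2) ≤ (1 - √(1-x²))/ln 2` and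
`x² ≤ (ln 4)·(1 - H((1+x)/2))`. -/
theorem entropy_tight_inequalities (x : ℝ) (hx : x ∈ Set.Icc (0 : ℝ) 1) :
    1 - binaryEntropy ((1 + x) / 2) ≤ (1 - Real.sqrt (1 - x ^ 2)) / Real.log 2 ∧
    x ^ 2 ≤ Real.log 4 * (1 - binaryEntropy ((1 + x) / 2)) := by
  obtain ⟨hx₀, hx₁⟩ := hx
  have hlog2 : 0 < log 2 := log_pos one_lt_two
  have hlog4 : log 4 = 2 * log 2 := by
    rw [show (4 : ℝ) = 2 ^ 2 by norm_num, log_pow, Nat.cast_ofNat]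
  have hbits :
      1 - binaryEntropy ((1 + x) / 2) = (log 2 - binEntropy ((1 + x) / 2)) / log 2 := by
    rw [binaryEntropy_eq_binEntropy_div_log_two]
    field_simp
  rw [hbits, hlog4]
  refine ⟨div_le_div_of_nonneg_right
    (log_two_sub_binEntropy_le_one_sub_sqrt hx₀ hx₁) hlog2.le, ?_⟩
  calc x ^ 2 ≤ 2 * (log 2 - binEntropy ((1 + x) / 2)) := by
        linarith [sq_div_two_le_log_two_sub_binEntropy hx₀ hx₁]
    _ = 2 * log 2 * ((log 2 - binEntropy ((1 + x) / 2)) / log 2) := by field_simp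
end

section
/- For x ∈ [0,1] and real k ≥ 1, we have (1/2)·min(kx, 1) ≤ 1 - (1-x)^k ≤ min(kx, 1). -/
/-! Bernoulli's inequality gives `1 - k x ≤ (1 - x)^k`, whence the upper bound. For the lower bound,
`(1 - x)^k ≤ exp (-k x)`, and `exp (-t) ≤ 1 - min t 1 / 2` for `t ≥ 0`: on `[0, 1]` because
`exp (-t) ≤ 1 / (1 + t) ≤ 1 - t / 2`, and beyond because `exp (-1) < 1 / 2`. -/

open Real

lemma one_sub_rpow_le_exp_neg_mul {x : ℝ} (hx : x ≤ 1) {k : ℝ} (hk : 0 ≤ k) :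
    (1 - x) ^ k ≤ exp (-(k * x)) :=
  calc (1 - x) ^ k ≤ exp (-x) ^ k := rpow_le_rpow (by linarith) (one_sub_le_exp_neg x) hk
    _ = exp (-(k * x)) := by rw [← exp_mul]; ring_nf

lemma exp_neg_le_one_sub_half {t : ℝ} (ht₀ : 0 ≤ t) (ht₁ : t ≤ 1) : exp (-t) ≤ 1 - t / 2 := by
  have h : exp (-t) * (1 + t) ≤ 1 := by
    calc exp (-t) * (1 + t) ≤ exp (-t) * exp t := by
          gcongr; linarith [add_one_le_exp t]
      _ = 1 := by rw [← exp_add, neg_add_cancel, exp_zero]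
  nlinarith [exp_pos (-t)]

lemma exp_neg_le_one_sub_half_min {t : ℝ} (ht : 0 ≤ t) : exp (-t) ≤ 1 - min t 1 / 2 := by
  rcases le_total t 1 with h | h
  · rw [min_eq_left h]
    exact exp_neg_le_one_sub_half ht h
  · rw [min_eq_right h]
    calc exp (-t) ≤ exp (-1) := exp_le_exp.2 (by linarith)
      _ ≤ 1 - 1 / 2 := by linarith [exp_neg_one_lt_half]

/-- For `x ∈ [0,1]` and real `k ≥ 1`:
`(1/2)·min(kx, 1) ≤ 1 - (1-x)^k ≤ min(kx, 1)`. -/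
theorem amp_inequality (x k : ℝ) (hx : x ∈ Set.Icc (0 : ℝ) 1) (hk : 1 ≤ k) :
    (1 / 2) * min (k * x) 1 ≤ 1 - (1 - x) ^ k ∧
      1 - (1 - x) ^ k ≤ min (k * x) 1 := by
  obtain ⟨hx₀, hx₁⟩ := hx
  have bernoulli : 1 + k * -x ≤ (1 - x) ^ k := by
    simpa [sub_eq_add_neg] using one_add_mul_self_le_rpow_one_add (neg_le_neg hx₁) hk
  refine ⟨?_, le_min (by linarith) (by linarith [rpow_nonneg (sub_nonneg.2 hx₁) k])⟩
  linarith [one_sub_rpow_le_exp_neg_mul hx₁ (zero_le_one.trans hk),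
    exp_neg_le_one_sub_half_min (mul_nonneg (zero_le_one.trans hk) hx₀)]
end

section
/- Let ν be a distribution on a finite set, and for functions φ : S → [0,1], define the hs-score of φ against true label b ∈ {0,1} as the ν-expectation of hs_b(φ(x)), where hs₁(q) = 1-√((1-q)/q) and hs₀(q) = 1-√(q/(1-q)). Given φ with scores η_b = E_{x←ν}[hs_b(φ(x))] for b ∈ {0,1}, both finite, there exists a function φ^(k) : S^k → [0,1] defined by φ^(k)(x₁,…,x_k) = (1 + ∏ᵢ (1-φ(xᵢ))/φ(xᵢ))⁻¹ such that E_{x←ν^{⊗k}}[hs_b(φ^(k)(x))] = 1 - (1 - η_b)^k for each b ∈ {0,1}. -/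
open Finset

/-- The scoring rule `hs` scored against true label `1`. -/
noncomputable def hs1 : ℝ → ℝ := fun q => 1 - Real.sqrt ((1 - q) / q)

/-- The scoring rule `hs` scored against true label `0`. -/
noncomputable def hs0 : ℝ → ℝ := fun q => 1 - Real.sqrt (q / (1 - q))

/-!
Write a forecast `q` through its odds `t = (1 - q) / q`, so `q = (1 + t)⁻¹`. Then
`hs₁(q) = 1 - √t` and `hs₀(q) = 1 - √t⁻¹`, and the odds of `φ⁽ᵏ⁾` are the product of the
odds of the `φ(xᵢ)`. Since `√` is multiplicative, `1 - hs_b(φ⁽ᵏ⁾)` is a product of `k`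
functions of the independent coordinates, so its `ν^{⊗k}`-expectation is `(1 - η_b)^k`.
-/

lemma hs1_inv_one_add {t : ℝ} (ht : 0 ≤ t) : hs1 (1 + t)⁻¹ = 1 - √t := by
  have h : (1 + t) ≠ 0 := by positivity
  unfold hs1
  congr 2
  field_simp
  ring

-- At `t = 0` both sides are `1`, thanks to `1 / 0 = 0` and `0⁻¹ = 0`.
lemma hs0_inv_one_add {t : ℝ} (ht : 0 ≤ t) : hs0 (1 + t)⁻¹ = 1 - √t⁻¹ := by
  have h : (1 + t) ≠ 0 := by positivity
  unfold hs0
  have hsub : 1 - (1 + t)⁻¹ = t * (1 + t)⁻¹ := by field_simp; ring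
  rw [hsub, div_mul_cancel_right₀ (inv_ne_zero h)]

lemma hs1_inv_one_add_prod {ι : Type*} (s : Finset ι) {f : ι → ℝ} (hf : ∀ i ∈ s, 0 ≤ f i) :
    hs1 (1 + ∏ i ∈ s, f i)⁻¹ = 1 - ∏ i ∈ s, √(f i) := by
  rw [hs1_inv_one_add (prod_nonneg hf), Real.sqrt_prod s hf]

lemma hs0_inv_one_add_prod {ι : Type*} (s : Finset ι) {f : ι → ℝ} (hf : ∀ i ∈ s, 0 ≤ f i) :
    hs0 (1 + ∏ i ∈ s, f i)⁻¹ = 1 - ∏ i ∈ s, √(f i)⁻¹ := by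
  rw [hs0_inv_one_add (prod_nonneg hf), ← prod_inv_distrib,
    Real.sqrt_prod s fun i hi => inv_nonneg.2 (hf i hi)]

section ProductWeights

variable {S : Type*} [Fintype S] {k : ℕ} {ν : S → ℝ}

lemma sum_prod_mul_congr_of_pos (hν0 : ∀ x, 0 ≤ ν x) {F G : (Fin k → S) → ℝ}
    (h : ∀ xs, (∀ i, 0 < ν (xs i)) → F xs = G xs) :
    ∑ xs : Fin k → S, (∏ i, ν (xs i)) * F xs = ∑ xs : Fin k → S, (∏ i, ν (xs i)) * G xs := by
  refine sum_congr rfl fun xs _ => ?_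
  by_cases hpos : ∀ i, 0 < ν (xs i)
  · rw [h xs hpos]
  · obtain ⟨i, hi⟩ := not_forall.1 hpos
    rw [prod_eq_zero (mem_univ i) (le_antisymm (not_lt.1 hi) (hν0 _)), zero_mul, zero_mul]

lemma sum_prod_mul_one_sub_prod (hν1 : ∑ x, ν x = 1) (g : S → ℝ) :
    ∑ xs : Fin k → S, (∏ i, ν (xs i)) * (1 - ∏ i, g (xs i))
      = 1 - (1 - ∑ x, ν x * (1 - g x)) ^ k := by
  have hmean : 1 - ∑ x, ν x * (1 - g x) = ∑ x, ν x * g x := by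
    simp only [mul_sub, mul_one, sum_sub_distrib, hν1, sub_sub_cancel]
  rw [hmean, Fintype.sum_pow]
  simp only [mul_sub, mul_one, sum_sub_distrib, ← prod_mul_distrib]
  rw [← Fintype.sum_pow ν, hν1, one_pow]

end ProductWeights

/-- Linear amplification of the `hs` score: combining `k` independent copies of
a forecaster `φ` via `φ⁽ᵏ⁾(x₁,…,x_k) = (1 + ∏ᵢ (1-φ(xᵢ))/φ(xᵢ))⁻¹` turns
expected scores `η_b` into expected scores `1 - (1-η_b)^k`.

The hypothesis that `0 < φ x < 1` on the support of `ν` encodes the assumption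
that `φ` never takes the values `0` and `1` on the support of `ν`, so that both
expected scores are finite. -/
theorem hs_score_amplification
    {S : Type*} [Fintype S] (k : ℕ)
    (ν : S → ℝ) (hν0 : ∀ x, 0 ≤ ν x) (hν1 : ∑ x, ν x = 1)
    (φ : S → ℝ) (hφ : ∀ x, 0 < ν x → 0 < φ x ∧ φ x < 1) :
    let φk : (Fin k → S) → ℝ := fun xs => (1 + ∏ i, (1 - φ (xs i)) / φ (xs i))⁻¹
    (∑ xs : Fin k → S, (∏ i, ν (xs i)) * hs0 (φk xs)
        = 1 - (1 - ∑ x, ν x * hs0 (φ x)) ^ k) ∧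
    (∑ xs : Fin k → S, (∏ i, ν (xs i)) * hs1 (φk xs)
        = 1 - (1 - ∑ x, ν x * hs1 (φ x)) ^ k) := by
  intro φk
  have hodds : ∀ xs : Fin k → S, (∀ i, 0 < ν (xs i)) →
      ∀ i ∈ univ, 0 ≤ (1 - φ (xs i)) / φ (xs i) := fun xs hxs i _ =>
    have ⟨hpos, hlt⟩ := hφ _ (hxs i)
    div_nonneg (sub_nonneg.2 hlt.le) hpos.le
  constructor
  · rw [sum_prod_mul_congr_of_pos hν0 (G := fun xs => 1 - ∏ i, √(φ (xs i) / (1 - φ (xs i))))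
      fun xs hxs => by simpa only [inv_div] using hs0_inv_one_add_prod univ (hodds xs hxs)]
    exact sum_prod_mul_one_sub_prod hν1 fun x => √(φ x / (1 - φ x))
  · rw [sum_prod_mul_congr_of_pos hν0 fun xs hxs => hs1_inv_one_add_prod univ (hodds xs hxs)]
    exact sum_prod_mul_one_sub_prod hν1 fun x => √((1 - φ x) / φ x)
end

section
/- Suppose a randomized predictor outputs the correct label with probability p ≥ (1+γ)/2 on some input, for γ ∈ (0,1). If the output 1 is replaced with forecast (1+γ)/2 and output 0 with forecast (1-γ)/2, then the expected hs-score p·hs((1+γ)/2) + (1-p)·hs((1-γ)/2) is at least 1 - √(1-γ²), where hs(q) = 1 - √((1-q)/q). In particular it is at least γ²/2. -/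
/-!
Write `s = √(1 - γ²)`. Since `q · √((1 - q) / q) = √(q (1 - q))`, the two forecasts lose
`√((1 - γ) / (1 + γ)) = s / (1 + γ)` and `√((1 + γ) / (1 - γ)) = s / (1 - γ)`, so at the threshold
`p = (1 + γ) / 2` the expected loss is exactly `s`. The expected score is affine in `p` and
increasing, because the forecast `(1 + γ) / 2` loses less than `(1 - γ) / 2`. Finally
`√(1 - x) ≤ 1 - x / 2` gives `1 - s ≥ γ² / 2`.
-/

open Real

lemma Real.mul_sqrt_div_self {a : ℝ} (ha : 0 ≤ a) (b : ℝ) : a * √(b / a) = √(a * b) := by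
  rw [sqrt_div' b ha, sqrt_mul ha, ← mul_div_assoc, mul_div_right_comm, div_sqrt]

lemma Real.sqrt_one_sub_le_one_sub_half {x : ℝ} (hx : x ≤ 2) : √(1 - x) ≤ 1 - x / 2 :=
  sqrt_le_iff.mpr ⟨by linarith, by nlinarith [sq_nonneg x]⟩

lemma one_sub_sqrt_one_sub_sq_le_expected_score {γ p : ℝ} (hγ0 : 0 ≤ γ) (hγ1 : γ < 1)
    (hp : (1 + γ) / 2 ≤ p) :
    1 - √(1 - γ ^ 2) ≤ p * (1 - √((1 - γ) / (1 + γ))) + (1 - p) * (1 - √((1 + γ) / (1 - γ))) := by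
  have hsq : (1 + γ) * (1 - γ) = 1 - γ ^ 2 := by ring
  have hloss_one : (1 + γ) * √((1 - γ) / (1 + γ)) = √(1 - γ ^ 2) := by
    rw [mul_sqrt_div_self (by linarith), hsq]
  have hloss_zero : (1 - γ) * √((1 + γ) / (1 - γ)) = √(1 - γ ^ 2) := by
    rw [mul_sqrt_div_self (by linarith), mul_comm, hsq]
  have hloss_le : √((1 - γ) / (1 + γ)) ≤ √((1 + γ) / (1 - γ)) :=
    sqrt_le_sqrt (div_le_div₀ (by linarith) (by linarith) (by linarith) (by linarith))
  nlinarith [mul_nonneg (sub_nonneg.mpr hp) (sub_nonneg.mpr hloss_le)]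

theorem bias_to_hs_score_general (γ p : ℝ) (hγ0 : 0 < γ) (hγ1 : γ < 1)
    (hp : (1 + γ) / 2 ≤ p) :
    1 - Real.sqrt (1 - γ ^ 2) ≤
      p * (1 - Real.sqrt ((1 - γ) / (1 + γ))) +
        (1 - p) * (1 - Real.sqrt ((1 + γ) / (1 - γ))) ∧
    γ ^ 2 / 2 ≤ 1 - Real.sqrt (1 - γ ^ 2) := by
  refine ⟨one_sub_sqrt_one_sub_sq_le_expected_score hγ0.le hγ1 hp, ?_⟩
  have hsqrt_le := sqrt_one_sub_le_one_sub_half (x := γ ^ 2) (by nlinarith)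
  linarith

/-- Converting a biased predictor into a forecaster: if the predictor is
correct with probability `p ≥ (1+γ)/2` and its outputs `1` and `0` are replaced
by the forecasts `(1+γ)/2` and `(1-γ)/2` respectively, then the expected
`hs`-score is at least `1 - √(1-γ²) ≥ γ²/2`. -/
theorem bias_to_hs_score (γ p : ℝ) (hγ0 : 0 < γ) (hγ1 : γ < 1)
    (hp : (1 + γ) / 2 ≤ p) (hp1 : p ≤ 1) :
    1 - Real.sqrt (1 - γ ^ 2) ≤
      p * (1 - Real.sqrt ((1 - γ) / (1 + γ))) +
        (1 - p) * (1 - Real.sqrt ((1 + γ) / (1 - γ))) ∧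
    γ ^ 2 / 2 ≤ 1 - Real.sqrt (1 - γ ^ 2) :=
  bias_to_hs_score_general γ p hγ0 hγ1 hp
end
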